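/- arXiv:1604.01386 — 8 statements merged into one kernel-verified Lean document; each statement's English description precedes it below -/
import Mathlib

section
/- If U is a non-empty set with relations z, r, e ⊆ U × U satisfying r∘e = r = e∘r, r∘r = r, z∘r = z = r∘z, and r ∩ e = z (where ∘ denotes relational composition), then the intersection of the identity relation on U with r is contained in z; that is, if (x,x) ∈ r then (x,x) ∈ z. -/
def rcomp {U : Type*} (a b : Set (U × U)) : Set (U × U) :=
  {p | ∃ w, (p.1, w) ∈ a ∧ (w, p.2) ∈ b}

theorem stmt0 {U : Type*} [Nonempty U] (z r e : Set (U × U))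
    (h1 : rcomp r e = r) (h2 : rcomp e r = r) (h3 : rcomp r r = r)
    (h4 : rcomp z r = z) (h5 : rcomp r z = z) (h6 : r ∩ e = z) :
    ∀ x : U, (x, x) ∈ r → (x, x) ∈ z := by
  intro x hx
  have hx' : ((x, x) : U × U) ∈ rcomp r e := h1.symm ▸ hx
  obtain ⟨w, hxw, hwx⟩ := hx'
  have hwxr : ((w, x) : U × U) ∈ r := h2 ▸ ⟨x, hwx, hx⟩
  have hwz : ((w, x) : U × U) ∈ z := h6 ▸ ⟨hwxr, hwx⟩
  exact h5 ▸ ⟨w, hxw, hwz⟩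
end

section
/- If U is a set with relations z, r, e ⊆ U × U satisfying r∘e = r = e∘r, r∘r = r, z∘r = z = r∘z, r ∩ e = z, and the three relations z, r, e are pairwise distinct, then the relation r ∩ zᶜ (the intersection of r with the complement of z in U × U) is non-empty and irreflexive (contained in the complement of the identity relation). -/
theorem stmt1 {U : Type*} (z r e : Set (U × U))
    (h1 : rcomp r e = r) (h2 : rcomp e r = r) (h3 : rcomp r r = r)
    (h4 : rcomp z r = z) (h5 : rcomp r z = z) (h6 : r ∩ e = z)
    (hzr : z ≠ r) (hze : z ≠ e) (hre : r ≠ e) :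
    (r ∩ zᶜ).Nonempty ∧ ∀ x : U, (x, x) ∉ r ∩ zᶜ := by
  have hzsub : z ⊆ r := by rw [← h6]; exact Set.inter_subset_left
  constructor
  · by_contra h
    rw [Set.not_nonempty_iff_eq_empty] at h
    apply hzr
    apply Set.Subset.antisymm hzsub
    intro p hp
    by_contra hpz
    have : p ∈ r ∩ zᶜ := ⟨hp, hpz⟩
    rw [h] at this
    exact this
  · rintro x ⟨hxr, hxz⟩
    apply hxz
    obtain ⟨v, hxv, hvx⟩ : (x, x) ∈ rcomp e r := by rw [h2]; exact hxr
    have hxvr : (x, v) ∈ r := by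
      rw [← h1]; exact ⟨x, hxr, hxv⟩
    have hxvz : (x, v) ∈ z := by rw [← h6]; exact ⟨hxvr, hxv⟩
    rw [← h4]
    exact ⟨v, hxvz, hvx⟩
end

section
/- If U is a set with relations z, r, e ⊆ U × U satisfying r∘e = r = e∘r, r∘r = r, z∘r = z = r∘z, r ∩ e = z, and z, r, e pairwise distinct, then the relation d := r ∩ zᶜ is dense: whenever (x,y) ∈ d there exists w ∈ U with (x,w) ∈ d and (w,y) ∈ d. -/
theorem stmt2 {U : Type*} (z r e : Set (U × U))
    (h1 : rcomp r e = r) (h2 : rcomp e r = r) (h3 : rcomp r r = r)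
    (h4 : rcomp z r = z) (h5 : rcomp r z = z) (h6 : r ∩ e = z)
    (hzr : z ≠ r) (hze : z ≠ e) (hre : r ≠ e) :
    ∀ x y : U, (x, y) ∈ r ∩ zᶜ →
      ∃ w : U, (x, w) ∈ r ∩ zᶜ ∧ (w, y) ∈ r ∩ zᶜ := by
  intro x y ⟨hr, hz⟩
  obtain ⟨w, hxw, hwy⟩ : (x, y) ∈ rcomp r r := by rw [h3]; exact hr
  refine ⟨w, ⟨hxw, fun hc => hz ?_⟩, ⟨hwy, fun hc => hz ?_⟩⟩
  · exact h4 ▸ ⟨w, hc, hwy⟩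
  · exact h5 ▸ ⟨w, hxw, hc⟩
end

section
/- If U is a set with relations z, r, e ⊆ U × U satisfying r∘e = r = e∘r, r∘r = r, z∘r = z = r∘z, r ∩ e = z, and z, r, e pairwise distinct, then for every natural number n there exist elements y, x_0, x_1, ..., x_n of U such that (x_i, x_j) ∈ r ∩ zᶜ whenever 0 ≤ i < j ≤ n, and (x_i, y) ∈ r ∩ zᶜ for all 0 ≤ i ≤ n. -/
/-! Since `r ∘ r = r`, the relation `r` is transitive and dense, so between any `r`-related
pair `(a, b)` lies an arbitrarily long `r`-chain (insert a midpoint `c` and recurse on `(c, b)`).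
As `z ⊊ r`, there is such a pair outside `z`; because `z` absorbs `r` on both sides, no pair
along a chain from `a` to `b` can lie in `z` either. -/

section

variable {U : Type*}

theorem mem_of_rcomp_eq {a b c : Set (U × U)} (h : rcomp a b = c) {x y w : U}
    (hxy : (x, y) ∈ a) (hyw : (y, w) ∈ b) : (x, w) ∈ c :=
  h ▸ ⟨y, hxy, hyw⟩

theorem exists_between_of_rcomp_self {r : Set (U × U)} (hr : rcomp r r = r) {a b : U}
    (hab : (a, b) ∈ r) : ∃ c, (a, c) ∈ r ∧ (c, b) ∈ r := by
  rw [← hr] at hab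
  exact hab

theorem exists_chain_of_rcomp_self {r : Set (U × U)} (hr : rcomp r r = r) (n : ℕ) :
    ∀ {a b : U}, (a, b) ∈ r → ∃ x : Fin (n + 1) → U,
      (∀ i j, i < j → (x i, x j) ∈ r) ∧ ∀ i, (a, x i) ∈ r ∧ (x i, b) ∈ r := by
  induction n with
  | zero =>
    intro a b hab
    obtain ⟨c, hac, hcb⟩ := exists_between_of_rcomp_self hr hab
    exact ⟨fun _ => c, fun i j hij => by
      simp [Fin.fin_one_eq_zero i, Fin.fin_one_eq_zero j] at hij,
      fun _ => ⟨hac, hcb⟩⟩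
  | succ n ih =>
    intro a b hab
    obtain ⟨c, hac, hcb⟩ := exists_between_of_rcomp_self hr hab
    obtain ⟨x, hx_chain, hx_bounds⟩ := ih hcb
    refine ⟨Fin.cons c x, ?_, ?_⟩
    · intro i j hij
      induction j using Fin.cases with
      | zero => exact absurd hij (Fin.not_lt_zero i)
      | succ j =>
        induction i using Fin.cases with
        | zero => simpa using (hx_bounds j).1
        | succ i => simpa using hx_chain i j (Fin.succ_lt_succ_iff.mp hij)
    · intro i
      induction i using Fin.cases with
      | zero => exact ⟨hac, hcb⟩
      | succ i => simpa using ⟨mem_of_rcomp_eq hr hac (hx_bounds i).1, (hx_bounds i).2⟩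

end

theorem stmt3_general {U : Type*} (z r e : Set (U × U))
    (h3 : rcomp r r = r)
    (h4 : rcomp z r = z) (h5 : rcomp r z = z) (h6 : r ∩ e = z)
    (hzr : z ≠ r) :
    ∀ n : ℕ, ∃ (y : U) (x : Fin (n + 1) → U),
      (∀ i j : Fin (n + 1), i < j → (x i, x j) ∈ r ∩ zᶜ) ∧
      (∀ i : Fin (n + 1), (x i, y) ∈ r ∩ zᶜ) := by
  intro n
  have hzr_sub : z ⊆ r := h6 ▸ Set.inter_subset_left
  obtain ⟨⟨a, b⟩, hab, hab_z⟩ := Set.exists_of_ssubset (hzr_sub.ssubset_of_ne hzr)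
  obtain ⟨x, hx_chain, hx_bounds⟩ := exists_chain_of_rcomp_self h3 n hab
  refine ⟨b, x, fun i j hij => ⟨hx_chain i j hij, fun hz => hab_z ?_⟩,
    fun i => ⟨(hx_bounds i).2, fun hz => hab_z ?_⟩⟩
  · exact mem_of_rcomp_eq h4 (mem_of_rcomp_eq h5 (hx_bounds i).1 hz) (hx_bounds j).2
  · exact mem_of_rcomp_eq h5 (hx_bounds i).1 hz

theorem stmt3 {U : Type*} (z r e : Set (U × U))
    (h1 : rcomp r e = r) (h2 : rcomp e r = r) (h3 : rcomp r r = r)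
    (h4 : rcomp z r = z) (h5 : rcomp r z = z) (h6 : r ∩ e = z)
    (hzr : z ≠ r) (hze : z ≠ e) (hre : r ≠ e) :
    ∀ n : ℕ, ∃ (y : U) (x : Fin (n + 1) → U),
      (∀ i j : Fin (n + 1), i < j → (x i, x j) ∈ r ∩ zᶜ) ∧
      (∀ i : Fin (n + 1), (x i, y) ∈ r ∩ zᶜ) :=
  stmt3_general z r e h3 h4 h5 h6 hzr
end

section
/- If U is a non-empty set with distinct relations z, r, e ⊆ U × U satisfying r∘e = r = e∘r, r∘r = r, z∘r = z = r∘z, and r ∩ e = z, then U is infinite. -/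
theorem stmt4 {U : Type*} [Nonempty U] (z r e : Set (U × U))
    (h1 : rcomp r e = r) (h2 : rcomp e r = r) (h3 : rcomp r r = r)
    (h4 : rcomp z r = z) (h5 : rcomp r z = z) (h6 : r ∩ e = z)
    (hzr : z ≠ r) (hze : z ≠ e) (hre : r ≠ e) :
    Infinite U := by
  by_contra hinf
  have hfin : Finite U := not_infinite_iff_finite.mp hinf
  -- basic consequences
  have hsub : z ⊆ r := fun p hp => (h6 ▸ hp : p ∈ r ∩ e).1
  have hsube : z ⊆ e := fun p hp => (h6 ▸ hp : p ∈ r ∩ e).2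
  have htr : ∀ a b c : U, (a,b) ∈ r → (b,c) ∈ r → (a,c) ∈ r := by
    intro a b c hab hbc
    have : ((a,c) : U × U) ∈ rcomp r r := ⟨b, hab, hbc⟩
    rwa [h3] at this
  have hdense : ∀ a b : U, (a,b) ∈ r → ∃ w, (a,w) ∈ r ∧ (w,b) ∈ r := by
    intro a b hab
    rw [← h3] at hab
    exact hab
  have her : ∀ a b c : U, (a,b) ∈ e → (b,c) ∈ r → (a,c) ∈ r := by
    intro a b c hab hbc
    have : ((a,c) : U × U) ∈ rcomp e r := ⟨b, hab, hbc⟩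
    rwa [h2] at this
  have hre' : ∀ a b c : U, (a,b) ∈ r → (b,c) ∈ e → (a,c) ∈ r := by
    intro a b c hab hbc
    have : ((a,c) : U × U) ∈ rcomp r e := ⟨b, hab, hbc⟩
    rwa [h1] at this
  have hzr' : ∀ a b c : U, (a,b) ∈ z → (b,c) ∈ r → (a,c) ∈ z := by
    intro a b c hab hbc
    have : ((a,c) : U × U) ∈ rcomp z r := ⟨b, hab, hbc⟩
    rwa [h4] at this
  have hrz' : ∀ a b c : U, (a,b) ∈ r → (b,c) ∈ z → (a,c) ∈ z := by
    intro a b c hab hbc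
    have : ((a,c) : U × U) ∈ rcomp r z := ⟨b, hab, hbc⟩
    rwa [h5] at this
  have hrsube : ∀ a b : U, (a,b) ∈ r → ∃ w, (a,w) ∈ r ∧ (w,b) ∈ e := by
    intro a b hab
    rw [← h1] at hab
    exact hab
  -- get an edge of r not in e
  have hex : ∃ p : U × U, p ∈ r ∧ p ∉ z := by
    by_contra h
    push_neg at h
    exact hzr (Set.Subset.antisymm hsub h)
  obtain ⟨⟨p1, p2⟩, hp, hpz⟩ := hex
  have hpe : ((p1, p2) : U × U) ∉ e := fun he =>
    hpz (h6 ▸ (⟨hp, he⟩ : (p1,p2) ∈ r ∩ e))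
  -- the "between" subtype and successor map
  have hstep : ∀ t : {x : U // (p1,x) ∈ r ∧ (x,p2) ∈ r},
      ∃ t' : {x : U // (p1,x) ∈ r ∧ (x,p2) ∈ r}, (t.1, t'.1) ∈ r := by
    rintro ⟨x, hx1, hx2⟩
    obtain ⟨w, hw1, hw2⟩ := hdense x p2 hx2
    exact ⟨⟨w, htr _ _ _ hx1 hw1, hw2⟩, hw1⟩
  choose g hg using hstep
  obtain ⟨w0, hw01, hw02⟩ := hdense p1 p2 hp
  set t0 : {x : U // (p1,x) ∈ r ∧ (x,p2) ∈ r} := ⟨w0, hw01, hw02⟩ with ht0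
  set f : ℕ → {x : U // (p1,x) ∈ r ∧ (x,p2) ∈ r} := fun n => g^[n] t0 with hf
  have hfsucc : ∀ n, ((f n).1, (f (n+1)).1) ∈ r := by
    intro n
    have : f (n+1) = g (f n) := Function.iterate_succ_apply' g n t0
    rw [this]
    exact hg (f n)
  have hchain : ∀ m n : ℕ, m < n → ((f m).1, (f n).1) ∈ r := by
    intro m n hmn
    induction n with
    | zero => omega
    | succ k ih =>
      rcases Nat.lt_succ_iff_lt_or_eq.mp hmn with h | h
      · exact htr _ _ _ (ih h) (hfsucc k)
      · subst h; exact hfsucc m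
  -- pigeonhole
  obtain ⟨i, j, hij, hfe⟩ :=
    Finite.exists_ne_map_eq_of_infinite (fun n => (f n).1)
  have huu : ∃ u : U, (p1,u) ∈ r ∧ (u,u) ∈ r ∧ (u,p2) ∈ r := by
    rcases hij.lt_or_gt with h | h
    · exact ⟨(f i).1, (f i).2.1, hfe ▸ hchain i j h, (f i).2.2⟩
    · exact ⟨(f j).1, (f j).2.1, hfe ▸ hchain j i h, (f j).2.2⟩
  obtain ⟨u, hpu, huu, hup⟩ := huu
  -- derive the contradiction
  obtain ⟨w, huw, hwu_e⟩ := hrsube u u huu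
  have hww : (w, w) ∈ r := her _ _ _ hwu_e huw
  have hwu_r : (w, u) ∈ r := hre' _ _ _ hww hwu_e
  have hwu_z : ((w, u) : U × U) ∈ z := h6 ▸ (⟨hwu_r, hwu_e⟩ : (w,u) ∈ r ∩ e)
  have hww_z : ((w, w) : U × U) ∈ z := hzr' _ _ _ hwu_z huw
  have hp1w : (p1, w) ∈ r := htr _ _ _ hpu huw
  have hp1w_z : ((p1, w) : U × U) ∈ z := hrz' _ _ _ hp1w hww_z
  have hwp2 : (w, p2) ∈ r := her _ _ _ hwu_e hup
  exact hpz (hzr' _ _ _ hp1w_z hwp2)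
end

section
/- There is no finite set U together with three pairwise distinct binary relations z, r, e on U that are closed under composition and intersection according to the point algebra tables, i.e., satisfying z∘z = z, z∘e = z, z∘r = z, e∘z = z, e∘e = e, e∘r = r, r∘z = z, r∘e = r, r∘r = r, and z∩z = z, z∩e = z, z∩r = z, e∩e = e, e∩r = z, r∩r = r. -/
lemma loop_of_finite {U : Type} [Finite U] (r : Set (U × U))
    (hrr : rcomp r r = r) {x y : U} (hxy : (x, y) ∈ r) :
    ∃ a, (a, a) ∈ r ∧ (x = a ∨ (x, a) ∈ r) ∧ (a, y) ∈ r := by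
  have trans : ∀ a b c : U, (a, b) ∈ r → (b, c) ∈ r → (a, c) ∈ r := by
    intro a b c h1 h2
    rw [← hrr]
    exact ⟨b, h1, h2⟩
  have dense : ∀ u : U, (u, y) ∈ r → ∃ w, (u, w) ∈ r ∧ (w, y) ∈ r := by
    intro u hu
    rw [← hrr] at hu
    exact hu
  let T := {u : U // (u, y) ∈ r ∧ (x = u ∨ (x, u) ∈ r)}
  have step : ∀ t : T, ∃ t' : T, (t.1, t'.1) ∈ r := by
    rintro ⟨u, hu, hxu⟩
    obtain ⟨w, h1, h2⟩ := dense u hu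
    refine ⟨⟨w, h2, Or.inr ?_⟩, h1⟩
    rcases hxu with h | h
    · exact h ▸ h1
    · exact trans x u w h h1
  let g : ℕ → T := fun n => Nat.rec ⟨x, hxy, Or.inl rfl⟩ (fun _ t => (step t).choose) n
  have gstep : ∀ n : ℕ, ((g n).1, (g (n + 1)).1) ∈ r := fun n => (step (g n)).choose_spec
  have gchain : ∀ m n : ℕ, n < m → ((g n).1, (g m).1) ∈ r := by
    intro m
    induction m with
    | zero => intro n hn; omega
    | succ k ih =>
      intro n hn
      rcases Nat.lt_succ_iff_lt_or_eq.mp hn with h | h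
      · exact trans _ _ _ (ih n h) (gstep k)
      · exact h ▸ gstep k
  obtain ⟨n, m, hne, heq⟩ := Finite.exists_ne_map_eq_of_infinite (fun n : ℕ => (g n).1)
  rcases Nat.lt_or_ge n m with h | h
  · have hloop : ((g n).1, (g n).1) ∈ r := by
      have := gchain m n h
      simpa [heq] using this
    exact ⟨(g n).1, hloop, (g n).2.2, (g n).2.1⟩
  · have h' : m < n := lt_of_le_of_ne h (Ne.symm hne)
    have hloop : ((g m).1, (g m).1) ∈ r := by
      have := gchain n m h'
      simpa [heq] using this
    exact ⟨(g m).1, hloop, (g m).2.2, (g m).2.1⟩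

theorem stmt7 :
    ¬ ∃ (U : Type) (_ : Finite U) (z r e : Set (U × U)),
      z ≠ r ∧ z ≠ e ∧ r ≠ e ∧
      rcomp z z = z ∧ rcomp z e = z ∧ rcomp z r = z ∧
      rcomp e z = z ∧ rcomp e e = e ∧ rcomp e r = r ∧
      rcomp r z = z ∧ rcomp r e = r ∧ rcomp r r = r ∧
      z ∩ z = z ∧ z ∩ e = z ∧ z ∩ r = z ∧
      e ∩ e = e ∧ e ∩ r = z ∧ r ∩ r = r := by
  rintro ⟨U, hFin, z, r, e, hzr, hze, hre, czz, cze, czr, cez, cee, cer, crz, cre, crr,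
    _, _, izr, _, ier, _⟩
  -- every r-loop is a z-loop
  have loopz : ∀ a : U, (a, a) ∈ r → (a, a) ∈ z := by
    intro a ha
    have h1 : (a, a) ∈ rcomp e r := by rw [cer]; exact ha
    obtain ⟨v, hav, hva⟩ := h1
    have hav_r : (a, v) ∈ r := by
      rw [← cre]; exact ⟨a, ha, hav⟩
    have hav_z : (a, v) ∈ z := by
      rw [← ier]; exact ⟨hav, hav_r⟩
    rw [← czr]
    exact ⟨v, hav_z, hva⟩
  -- r ⊆ z
  have hrz_sub : r ⊆ z := by
    rintro ⟨x, y⟩ hxy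
    obtain ⟨a, hloop, hxa, hay⟩ := loop_of_finite r crr hxy
    have haz : (a, a) ∈ z := loopz a hloop
    rcases hxa with h | h
    · rw [← czr]; exact ⟨a, by rw [h]; exact haz, hay⟩
    · have hxa_z : (x, a) ∈ z := by
        rw [← crz]; exact ⟨a, h, haz⟩
      rw [← czr]; exact ⟨a, hxa_z, hay⟩
  have hzr_sub : z ⊆ r := by
    intro p hp
    have : p ∈ z ∩ r := by rw [izr]; exact hp
    exact this.2
  exact hzr (le_antisymm hzr_sub hrz_sub)
end

section
/- There exists a finite algebra (A, ;, ·) with two binary operations that is isomorphic to an algebra of binary relations on some set closed under composition and intersection (with ; interpreted as composition and · as intersection), but is not isomorphic to any algebra of binary relations on a finite set closed under composition and intersection. Concretely, the three-element algebra A = {z, e, r} with operations given by the point algebra tables (z;z = z, z;e = z, z;r = z, e;z = z, e;e = e, e;r = r, r;z = z, r;e = r, r;r = r; z·x = z for all x, e·e = e, e·r = z, r·r = r) has this property. -/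
def IsRepresentation {A : Type*} (c m : A → A → A) (U : Type*)
    (f : A → Set (U × U)) : Prop :=
  Function.Injective f ∧
    (∀ a b, f (c a b) = rcomp (f a) (f b)) ∧
    (∀ a b, f (m a b) = f a ∩ f b)

/-- Point algebra on `Fin 3`: 0 = z, 1 = e, 2 = r. -/
def paComp : Fin 3 → Fin 3 → Fin 3 :=
  ![![0, 0, 0], ![0, 1, 2], ![0, 2, 2]]

def paInter : Fin 3 → Fin 3 → Fin 3 :=
  ![![0, 0, 0], ![0, 1, 0], ![0, 0, 2]]

/-- The rational representation of the point algebra. -/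
def qf : Fin 3 → Set (ℚ × ℚ) := ![∅, {p | p.1 = p.2}, {p | p.1 < p.2}]

lemma rcomp_empty_left (x : Set (ℚ × ℚ)) : rcomp ∅ x = ∅ := by
  ext p; simp [rcomp]

lemma rcomp_empty_right (x : Set (ℚ × ℚ)) : rcomp x ∅ = ∅ := by
  ext p; simp [rcomp]

lemma rcomp_eq_eq : rcomp {p : ℚ × ℚ | p.1 = p.2} {p : ℚ × ℚ | p.1 = p.2}
    = {p : ℚ × ℚ | p.1 = p.2} := by
  ext ⟨x, y⟩
  constructor
  · rintro ⟨w, h1, h2⟩; exact h1.trans h2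
  · intro h; exact ⟨x, rfl, h⟩

lemma rcomp_eq_lt : rcomp {p : ℚ × ℚ | p.1 = p.2} {p : ℚ × ℚ | p.1 < p.2}
    = {p : ℚ × ℚ | p.1 < p.2} := by
  ext ⟨x, y⟩
  constructor
  · rintro ⟨w, h1, h2⟩; exact lt_of_eq_of_lt h1 h2
  · intro h; exact ⟨x, rfl, h⟩

lemma rcomp_lt_eq : rcomp {p : ℚ × ℚ | p.1 < p.2} {p : ℚ × ℚ | p.1 = p.2}
    = {p : ℚ × ℚ | p.1 < p.2} := by
  ext ⟨x, y⟩
  constructor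
  · rintro ⟨w, h1, h2⟩; exact lt_of_lt_of_eq h1 h2
  · intro h; exact ⟨y, h, rfl⟩

lemma rcomp_lt_lt : rcomp {p : ℚ × ℚ | p.1 < p.2} {p : ℚ × ℚ | p.1 < p.2}
    = {p : ℚ × ℚ | p.1 < p.2} := by
  ext ⟨x, y⟩
  constructor
  · rintro ⟨w, h1, h2⟩
    exact lt_trans (show x < w from h1) (show w < y from h2)
  · intro h
    obtain ⟨w, hw1, hw2⟩ := exists_between (show (x : ℚ) < y from h)
    exact ⟨w, hw1, hw2⟩

lemma inter_empty_left (x : Set (ℚ × ℚ)) : (∅ : Set (ℚ × ℚ)) ∩ x = ∅ :=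
  Set.empty_inter x

lemma inter_empty_right (x : Set (ℚ × ℚ)) : x ∩ (∅ : Set (ℚ × ℚ)) = ∅ :=
  Set.inter_empty x

lemma inter_eq_lt : {p : ℚ × ℚ | p.1 = p.2} ∩ {p : ℚ × ℚ | p.1 < p.2} = ∅ := by
  ext ⟨x, y⟩
  simp only [Set.mem_inter_iff, Set.mem_setOf_eq, Set.mem_empty_iff_false, iff_false]
  rintro ⟨h1, h2⟩
  rw [h1] at h2
  exact lt_irrefl y h2

lemma inter_lt_eq : {p : ℚ × ℚ | p.1 < p.2} ∩ {p : ℚ × ℚ | p.1 = p.2} = ∅ := by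
  rw [Set.inter_comm]; exact inter_eq_lt

lemma ne_empty_eq : (∅ : Set (ℚ × ℚ)) ≠ {p : ℚ × ℚ | p.1 = p.2} := by
  intro h
  exact Set.notMem_empty ((0:ℚ), (0:ℚ)) ((Set.ext_iff.mp h ((0:ℚ), (0:ℚ))).mpr rfl)

lemma ne_empty_lt : (∅ : Set (ℚ × ℚ)) ≠ {p : ℚ × ℚ | p.1 < p.2} := by
  intro h
  exact Set.notMem_empty ((0:ℚ), (1:ℚ))
    ((Set.ext_iff.mp h ((0:ℚ), (1:ℚ))).mpr (by norm_num))

lemma ne_eq_lt : ({p : ℚ × ℚ | p.1 = p.2} : Set (ℚ × ℚ)) ≠ {p : ℚ × ℚ | p.1 < p.2} := by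
  intro h
  have : ((0:ℚ), (0:ℚ)) ∈ {p : ℚ × ℚ | p.1 < p.2} :=
    (Set.ext_iff.mp h ((0:ℚ), (0:ℚ))).mp rfl
  exact lt_irrefl (0:ℚ) this

lemma qf_rep : IsRepresentation paComp paInter ℚ qf := by
  refine ⟨?_, ?_, ?_⟩
  · intro i j h
    fin_cases i <;> fin_cases j <;>
      first
        | rfl
        | exact absurd h ne_empty_eq
        | exact absurd h ne_empty_lt
        | exact absurd h ne_eq_lt
        | exact absurd h.symm ne_empty_eq
        | exact absurd h.symm ne_empty_lt
        | exact absurd h.symm ne_eq_lt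
  · intro a b
    fin_cases a <;> fin_cases b <;>
      first
        | exact (rcomp_empty_left _).symm
        | exact (rcomp_empty_right _).symm
        | exact rcomp_eq_eq.symm
        | exact rcomp_eq_lt.symm
        | exact rcomp_lt_eq.symm
        | exact rcomp_lt_lt.symm
  · intro a b
    fin_cases a <;> fin_cases b <;>
      first
        | exact (inter_empty_left _).symm
        | exact (inter_empty_right _).symm
        | exact (Set.inter_self _).symm
        | exact inter_eq_lt.symm
        | exact inter_lt_eq.symm

theorem stmt8 :
    (∃ (U : Type) (f : Fin 3 → Set (U × U)), IsRepresentation paComp paInter U f) ∧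
    ¬ ∃ (U : Type) (_ : Finite U) (f : Fin 3 → Set (U × U)),
        IsRepresentation paComp paInter U f := by
  constructor
  · exact ⟨ℚ, qf, qf_rep⟩
  · rintro ⟨U, hfin, f, hinj, hc, hm⟩
    -- abbreviations for the algebraic facts
    have hER : f 1 ∩ f 2 = f 0 := by
      have := hm 1 2; rw [show paInter 1 2 = 0 from rfl] at this; exact this.symm
    have hRR : rcomp (f 2) (f 2) = f 2 := by
      have := hc 2 2; rw [show paComp 2 2 = 2 from rfl] at this; exact this.symm
    have hEcR : rcomp (f 1) (f 2) = f 2 := by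
      have := hc 1 2; rw [show paComp 1 2 = 2 from rfl] at this; exact this.symm
    have hRcE : rcomp (f 2) (f 1) = f 2 := by
      have := hc 2 1; rw [show paComp 2 1 = 2 from rfl] at this; exact this.symm
    have hZR : rcomp (f 0) (f 2) = f 0 := by
      have := hc 0 2; rw [show paComp 0 2 = 0 from rfl] at this; exact this.symm
    have hRZ : rcomp (f 2) (f 0) = f 0 := by
      have := hc 2 0; rw [show paComp 2 0 = 0 from rfl] at this; exact this.symm
    have dens : ∀ x y : U, (x, y) ∈ f 2 → ∃ w, (x, w) ∈ f 2 ∧ (w, y) ∈ f 2 := by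
      intro x y h
      have : (x, y) ∈ rcomp (f 2) (f 2) := by rw [hRR]; exact h
      exact this
    have htrans : ∀ x y z : U, (x, y) ∈ f 2 → (y, z) ∈ f 2 → (x, z) ∈ f 2 := by
      intro x y z h1 h2
      rw [← hRR]; exact ⟨y, h1, h2⟩
    have loopZ : ∀ a : U, (a, a) ∈ f 2 → (a, a) ∈ f 0 := by
      intro a ha
      have h1 : (a, a) ∈ rcomp (f 1) (f 2) := by rw [hEcR]; exact ha
      obtain ⟨w, hw1, hw2⟩ := h1
      have haw : (a, w) ∈ f 2 := by rw [← hRcE]; exact ⟨a, ha, hw1⟩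
      have hawZ : (a, w) ∈ f 0 := by rw [← hER]; exact ⟨hw1, haw⟩
      rw [← hZR]; exact ⟨w, hawZ, hw2⟩
    -- there is a pair in r but not in e
    obtain ⟨⟨s, t⟩, hstR, hstE⟩ : ∃ p ∈ f 2, p ∉ f 1 := by
      by_contra h
      push_neg at h
      have heq : f 1 ∩ f 2 = f 2 := by
        ext p; exact ⟨fun hp => hp.2, fun hp => ⟨h p hp, hp⟩⟩
      exact absurd (hinj (hER.symm.trans heq)) (by decide)
    -- build an infinite chain below t
    have hex : ∀ x : {x : U // (x, t) ∈ f 2}, ∃ w : {x : U // (x, t) ∈ f 2},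
        (x.1, w.1) ∈ f 2 := by
      rintro ⟨x, hx⟩
      obtain ⟨w, hw1, hw2⟩ := dens x t hx
      exact ⟨⟨w, hw2⟩, hw1⟩
    choose G hG using hex
    set g : ℕ → {x : U // (x, t) ∈ f 2} := fun n => G^[n] ⟨s, hstR⟩ with hg
    have hstep : ∀ n, ((g n).1, (g (n + 1)).1) ∈ f 2 := by
      intro n
      have : g (n + 1) = G (g n) := Function.iterate_succ_apply' G n _
      rw [this]; exact hG (g n)
    have hchain : ∀ i j, i < j → ((g i).1, (g j).1) ∈ f 2 := by
      intro i j hij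
      induction j with
      | zero => omega
      | succ j ih =>
        rcases Nat.lt_succ_iff_lt_or_eq.mp hij with h | h
        · exact htrans _ _ _ (ih h) (hstep j)
        · subst h; exact hstep i
    -- pigeonhole: two equal values give a loop
    obtain ⟨i, j, hne, heq⟩ := Finite.exists_ne_map_eq_of_infinite g
    wlog hij : i < j generalizing i j
    · exact this j i hne.symm heq.symm (by omega)
    set a : U := (g i).1 with ha
    have haloop : (a, a) ∈ f 2 := by
      have := hchain i j hij
      rw [← heq] at this
      exact this
    have haZ : (a, a) ∈ f 0 := loopZ a haloop
    have hatZ : (a, t) ∈ f 0 := by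
      rw [← hZR]; exact ⟨a, haZ, (g i).2⟩
    have hstZ : (s, t) ∈ f 0 := by
      rcases Nat.eq_zero_or_pos i with h0 | h0
      · have : g i = ⟨s, hstR⟩ := by rw [h0]; rfl
        have has : a = s := by rw [ha, this]
        rw [← has]; exact hatZ
      · have hsa : (s, a) ∈ f 2 := hchain 0 i h0
        rw [← hRZ]; exact ⟨a, hsa, hatZ⟩
    rw [← hER] at hstZ
    exact hstE hstZ.1
end

section
/- If U is a set with relations z, r, e ⊆ U × U satisfying r∘e = r = e∘r, r∘r = r, z∘r = z = r∘z, r ∩ e = z, and z, r, e pairwise distinct, then there exists an injective sequence x : ℕ → U such that (x_i, x_j) ∈ r ∩ zᶜ for all i < j. -/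
theorem stmt9 {U : Type*} (z r e : Set (U × U))
    (h1 : rcomp r e = r) (h2 : rcomp e r = r) (h3 : rcomp r r = r)
    (h4 : rcomp z r = z) (h5 : rcomp r z = z) (h6 : r ∩ e = z)
    (hzr : z ≠ r) (hze : z ≠ e) (hre : r ≠ e) :
    ∃ x : ℕ → U, Function.Injective x ∧
      ∀ i j : ℕ, i < j → (x i, x j) ∈ r ∩ zᶜ := by
  -- basic composition lemmas
  have hzr' : ∀ a b c : U, (a, b) ∈ z → (b, c) ∈ r → (a, c) ∈ z := by
    intro a b c hz hr
    rw [← h4]; exact ⟨b, hz, hr⟩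
  have hrz' : ∀ a b c : U, (a, b) ∈ r → (b, c) ∈ z → (a, c) ∈ z := by
    intro a b c hr hz
    rw [← h5]; exact ⟨b, hr, hz⟩
  have hrr : ∀ a b c : U, (a, b) ∈ r → (b, c) ∈ r → (a, c) ∈ r := by
    intro a b c ha hb
    rw [← h3]; exact ⟨b, ha, hb⟩
  -- irreflexivity of r \ z
  have hirr : ∀ x : U, (x, x) ∈ r → (x, x) ∈ z := by
    intro x hx
    have hx2 : (x, x) ∈ rcomp e r := by rw [h2]; exact hx
    obtain ⟨u, hxu, hux⟩ := hx2
    have hxur : (x, u) ∈ r := by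
      rw [← h1]; exact ⟨x, hx, hxu⟩
    have hxuz : (x, u) ∈ z := by rw [← h6]; exact ⟨hxur, hxu⟩
    exact hzr' x u x hxuz hux
  -- z ⊆ r
  have hzsubr : z ⊆ r := by rw [← h6]; exact Set.inter_subset_left
  -- nonempty: ∃ p ∈ r \ z
  have hne : ∃ p : U × U, p ∈ r ∧ p ∉ z := by
    by_contra h
    push_neg at h
    exact hzr (Set.Subset.antisymm hzsubr (fun p hp => h p hp))
  obtain ⟨⟨a, b⟩, hab, habz⟩ := hne
  -- density
  have hdense : ∀ p q : U, (p, q) ∈ r → (p, q) ∉ z →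
      ∃ w, ((p, w) ∈ r ∧ (p, w) ∉ z) ∧ ((w, q) ∈ r ∧ (w, q) ∉ z) := by
    intro p q hr hz
    have : (p, q) ∈ rcomp r r := by rw [h3]; exact hr
    obtain ⟨w, hpw, hwq⟩ := this
    refine ⟨w, ⟨hpw, ?_⟩, ⟨hwq, ?_⟩⟩
    · intro hzz; exact hz (hzr' p w q hzz hwq)
    · intro hzz; exact hz (hrz' p w q hpw hzz)
  -- recursive construction
  let T := {w : U // (w, b) ∈ r ∧ (w, b) ∉ z}
  have step : ∀ t : T, ∃ m : T, (t.1, m.1) ∈ r ∧ (t.1, m.1) ∉ z := by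
    intro ⟨w, hw1, hw2⟩
    obtain ⟨m, hm1, hm2⟩ := hdense w b hw1 hw2
    exact ⟨⟨m, hm2.1, hm2.2⟩, hm1.1, hm1.2⟩
  choose f hf1 hf2 using step
  let X : ℕ → T := fun n => Nat.rec ⟨a, hab, habz⟩ (fun _ t => f t) n
  have hXsucc : ∀ n, ((X n).1, (X (n+1)).1) ∈ r ∧ ((X n).1, (X (n+1)).1) ∉ z := by
    intro n
    exact ⟨hf1 (X n), hf2 (X n)⟩
  -- chain in r
  have hchain : ∀ i j : ℕ, i < j → ((X i).1, (X j).1) ∈ r := by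
    intro i j hij
    induction j with
    | zero => omega
    | succ k ih =>
      rcases Nat.lt_succ_iff_lt_or_eq.mp hij with h | h
      · exact hrr _ _ _ (ih h) (hXsucc k).1
      · subst h; exact (hXsucc i).1
  -- chain avoids z, using (X j, b) ∈ r \ z
  have hchain' : ∀ i j : ℕ, i < j → ((X i).1, (X j).1) ∉ z := by
    intro i j hij hz
    exact (X i).2.2 (hzr' _ _ _ hz (X j).2.1)
  refine ⟨fun n => (X n).1, ?_, fun i j hij => ⟨hchain i j hij, hchain' i j hij⟩⟩
  intro i j hij
  have hij' : (X i).1 = (X j).1 := hij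
  by_contra hne'
  rcases Nat.lt_or_ge i j with h | h
  · have := hchain i j h
    rw [hij'] at this
    apply hchain' i j h
    rw [hij']
    exact hirr _ this
  · have hj : j < i := lt_of_le_of_ne h (Ne.symm hne')
    have := hchain j i hj
    rw [← hij'] at this
    apply hchain' j i hj
    rw [← hij']
    exact hirr _ this
end
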